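/- arXiv:math/9307213 — 5 statements merged into one kernel-verified Lean document; each statement's English description precedes it below -/
import Mathlib

section
/- For Re ν > -1, Re β > 0 and α > 0, ∫_0^∞ e^{-β t} t^{2ν+1} · ₀F₃(3/2, ν+1, ν+3/2; -α t²) dt = (Γ(2ν+2)/(4√α)) · β^{-(2ν+1)} · sin(4√α/β). -/
open MeasureTheory Real

/-- Pochhammer symbol for real arguments. -/
noncomputable def poch (b : ℝ) (k : ℕ) : ℝ := ∏ i ∈ Finset.range k, (b + i)

/-- The generalized hypergeometric series `₀F₃`. -/
noncomputable def hyp0F3 (b₁ b₂ b₃ x : ℝ) : ℝ :=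
  ∑' k : ℕ, x ^ k / (poch b₁ k * poch b₂ k * poch b₃ k * k.factorial)

/-!
Integrate the series termwise: the `k`-th term contributes
`(-α)^k Γ(2ν+2+2k) / (β^(2ν+2+2k) (3/2)_k (ν+1)_k (ν+3/2)_k k!)`. The duplication formula
`Γ(2ν+2+2k) = 4^k (ν+1)_k (ν+3/2)_k Γ(2ν+2)` together with `(2k+1)! = 4^k (3/2)_k k!` turns this
into `Γ(2ν+2) β^(-(2ν+2)) (-16α/β²)^k / (2k+1)!`, so the sum is `Γ(2ν+2) β^(-(2ν+2))` times
`sin y / y` at `y = 4√α/β`.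
-/

open Finset Nat

lemma poch_succ (b : ℝ) (k : ℕ) : poch b (k + 1) = poch b k * (b + k) :=
  prod_range_succ _ _

lemma poch_pos {b : ℝ} (hb : 0 < b) (k : ℕ) : 0 < poch b k :=
  prod_pos fun _ _ => by positivity

lemma Gamma_add_two_mul {s : ℝ} (hs : 0 < s) (k : ℕ) :
    Gamma (s + 2 * k) = 4 ^ k * poch (s / 2) k * poch ((s + 1) / 2) k * Gamma s := by
  induction k with
  | zero => simp [poch]
  | succ k ih =>
    have hsk : 0 < s + 2 * k := by positivity
    rw [show s + 2 * ((k + 1 : ℕ) : ℝ) = s + 2 * k + 1 + 1 by push_cast; ring,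
      Gamma_add_one (by positivity), Gamma_add_one hsk.ne', ih, poch_succ, poch_succ]
    ring

lemma factorial_two_mul_add_one (k : ℕ) :
    ((2 * k + 1)! : ℝ) = 4 ^ k * poch (3 / 2) k * k ! := by
  induction k with
  | zero => simp [poch]
  | succ k ih =>
    rw [show 2 * (k + 1) + 1 = 2 * k + 1 + 1 + 1 by ring, factorial_succ (2 * k + 1 + 1),
      factorial_succ (2 * k + 1), factorial_succ k, poch_succ]
    push_cast
    linear_combination (2 * (k : ℝ) + 3) * (2 * k + 2) * ih

noncomputable def hyp0F3Denom (b₁ b₂ b₃ : ℝ) (k : ℕ) : ℝ :=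
  poch b₁ k * poch b₂ k * poch b₃ k * k !

lemma rpow_mul_hyp0F3_mul_sq (b₁ b₂ b₃ a x : ℝ) {t : ℝ} (ht : 0 < t) :
    t ^ (a - 1) * hyp0F3 b₁ b₂ b₃ (x * t ^ 2) =
      ∑' k : ℕ, x ^ k / hyp0F3Denom b₁ b₂ b₃ k * t ^ (a + 2 * k - 1) := by
  rw [hyp0F3, ← tsum_mul_left]
  congr 1
  ext k
  rw [show a + 2 * k - 1 = (a - 1) + (2 * k : ℕ) by push_cast; ring, rpow_add ht, rpow_natCast,
    hyp0F3Denom]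
  ring

lemma integral_exp_neg_mul_mul_rpow {β s : ℝ} (hβ : 0 < β) (hs : 0 < s) :
    ∫ t in Set.Ioi 0, exp (-β * t) * t ^ (s - 1) = Gamma s / β ^ s := by
  calc ∫ t in Set.Ioi 0, exp (-β * t) * t ^ (s - 1)
      = ∫ t in Set.Ioi 0, t ^ (s - 1) * exp (-(β * t)) := by congr 1; ext t; ring_nf
    _ = (1 / β) ^ s * Gamma s := integral_rpow_mul_exp_neg_mul_Ioi hs hβ
    _ = Gamma s / β ^ s := by rw [div_rpow zero_le_one hβ.le, one_rpow]; ring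

lemma integrableOn_exp_neg_mul_mul_rpow {β s : ℝ} (hβ : 0 < β) (hs : 0 < s) :
    IntegrableOn (fun t => exp (-β * t) * t ^ (s - 1)) (Set.Ioi 0) :=
  Integrable.of_integral_ne_zero <| by
    rw [integral_exp_neg_mul_mul_rpow hβ hs]
    exact (div_pos (Gamma_pos_of_pos hs) (rpow_pos_of_pos hβ s)).ne'

-- In `ℝ` summability is absolute, which licenses exchanging the sum and the integral.
theorem integral_exp_neg_mul_mul_tsum {β : ℝ} (hβ : 0 < β) {c s : ℕ → ℝ} (hs : ∀ k, 0 < s k)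
    (hsum : Summable fun k => c k * (Gamma (s k) / β ^ s k)) :
    ∫ t in Set.Ioi 0, exp (-β * t) * ∑' k, c k * t ^ (s k - 1) =
      ∑' k, c k * (Gamma (s k) / β ^ s k) := by
  set F : ℕ → ℝ → ℝ := fun k t => c k * (exp (-β * t) * t ^ (s k - 1))
  have hF_int (k : ℕ) : IntegrableOn (F k) (Set.Ioi 0) :=
    (integrableOn_exp_neg_mul_mul_rpow hβ (hs k)).const_mul (c k)
  have hF_integral (k : ℕ) : ∫ t in Set.Ioi 0, F k t = c k * (Gamma (s k) / β ^ s k) := by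
    rw [integral_const_mul, integral_exp_neg_mul_mul_rpow hβ (hs k)]
  have hF_norm (k : ℕ) : ∫ t in Set.Ioi 0, ‖F k t‖ = |c k * (Gamma (s k) / β ^ s k)| := by
    have hpos : 0 < Gamma (s k) / β ^ s k :=
      div_pos (Gamma_pos_of_pos (hs k)) (rpow_pos_of_pos hβ _)
    rw [abs_mul, abs_of_pos hpos, ← integral_exp_neg_mul_mul_rpow hβ (hs k), ← integral_const_mul]
    refine setIntegral_congr_fun measurableSet_Ioi fun t (ht : 0 < t) => ?_
    rw [Real.norm_eq_abs, abs_mul, abs_of_pos (mul_pos (exp_pos _) (rpow_pos_of_pos ht _))]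
  calc ∫ t in Set.Ioi 0, exp (-β * t) * ∑' k, c k * t ^ (s k - 1)
      = ∫ t in Set.Ioi 0, ∑' k, F k t := by
        congr 1; ext t; rw [← tsum_mul_left]; congr 1; ext k; ring
    _ = ∑' k, ∫ t in Set.Ioi 0, F k t :=
        (integral_tsum_of_summable_integral_norm hF_int
          (by simpa only [hF_norm] using hsum.abs)).symm
    _ = _ := tsum_congr hF_integral

lemma pow_div_hyp0F3Denom_mul_Gamma_div {ν β : ℝ} (hν : -1 < ν) (hβ : 0 < β) (x : ℝ) (k : ℕ) :
    x ^ k / hyp0F3Denom (3 / 2) (ν + 1) (ν + 3 / 2) k *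
        (Gamma (2 * ν + 2 + 2 * k) / β ^ (2 * ν + 2 + 2 * k)) =
      Gamma (2 * ν + 2) / β ^ (2 * ν + 2) * ((16 * x / β ^ 2) ^ k / (2 * k + 1)!) := by
  have h₁ := (poch_pos (by norm_num : (0 : ℝ) < 3 / 2) k).ne'
  have h₂ := (poch_pos (by linarith : 0 < ν + 1) k).ne'
  have h₃ := (poch_pos (by linarith : 0 < ν + 3 / 2) k).ne'
  have hGamma := Gamma_add_two_mul (by linarith : 0 < 2 * ν + 2) k
  rw [show (2 * ν + 2) / 2 = ν + 1 by ring, show (2 * ν + 2 + 1) / 2 = ν + 3 / 2 by ring] at hGamma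
  rw [hyp0F3Denom, hGamma, factorial_two_mul_add_one, rpow_add hβ, mul_comm 2 (k : ℝ),
    rpow_mul hβ.le, rpow_natCast, rpow_two, div_pow, mul_pow, show (16 : ℝ) ^ k = 4 ^ k * 4 ^ k by
      rw [← mul_pow]; norm_num]
  have hβ₀ := hβ.ne'
  generalize poch (3 / 2) k = p₁ at h₁ ⊢
  generalize poch (ν + 1) k = p₂ at h₂ ⊢
  generalize poch (ν + 3 / 2) k = p₃ at h₃ ⊢
  field_simp
  ring

lemma hasSum_neg_sq_pow_div_factorial {y : ℝ} (hy : y ≠ 0) :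
    HasSum (fun k : ℕ => (-y ^ 2) ^ k / (2 * k + 1)!) (sin y / y) := by
  convert (Real.hasSum_sin y).div_const y using 1
  · rfl
  funext k
  rw [neg_pow, ← pow_mul, pow_succ]
  field_simp

theorem laplace_hyp0F3 (ν α β : ℝ) (hν : ν > -1) (hβ : 0 < β) (hα : 0 < α) :
    (∫ t in Set.Ioi (0 : ℝ),
        Real.exp (-β * t) * t ^ (2 * ν + 1) * hyp0F3 (3/2) (ν + 1) (ν + 3/2) (-α * t ^ 2)) =
      (Real.Gamma (2 * ν + 2) / (4 * Real.sqrt α)) * β ^ (-(2 * ν + 1)) *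
        Real.sin (4 * Real.sqrt α / β) := by
  set y := 4 * sqrt α / β with hy_def
  have hy : y ≠ 0 := by positivity
  have hy_sq : 16 * (-α) / β ^ 2 = -y ^ 2 := by rw [div_pow, mul_pow, sq_sqrt hα.le]; ring
  have hs (k : ℕ) : 0 < 2 * ν + 2 + 2 * k := by linarith [k.cast_nonneg (α := ℝ)]
  have hseries :=
    (hasSum_neg_sq_pow_div_factorial hy).mul_left (Gamma (2 * ν + 2) / β ^ (2 * ν + 2))
  simp only [← hy_sq, ← pow_div_hyp0F3Denom_mul_Gamma_div hν hβ] at hseries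
  calc _ = ∫ t in Set.Ioi 0, exp (-β * t) * ∑' k : ℕ,
          (-α) ^ k / hyp0F3Denom (3 / 2) (ν + 1) (ν + 3 / 2) k * t ^ (2 * ν + 2 + 2 * k - 1) :=
        setIntegral_congr_fun measurableSet_Ioi fun t ht => by
          rw [mul_assoc, show 2 * ν + 1 = 2 * ν + 2 - 1 by ring,
            rpow_mul_hyp0F3_mul_sq _ _ _ _ _ ht]
    _ = Gamma (2 * ν + 2) / β ^ (2 * ν + 2) * (sin y / y) := by
        rw [integral_exp_neg_mul_mul_tsum hβ hs hseries.summable, hseries.tsum_eq]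
    _ = _ := by
        rw [rpow_neg hβ.le, show 2 * ν + 2 = 2 * ν + 1 + 1 by ring, rpow_add_one hβ.ne', hy_def]
        field_simp
end

section
/- For Re ν > -1/2 and |y| < 1: J_ν(π y/2) = (1/(√π Γ(ν+1/2))) · (π y/4)^ν (1-y²)^{ν+1/2} · ∫_{-1}^{1} (1-u²)^{ν-1/2}/(1+u y)^{2ν+1} · sin((π/2)·(1-y²)/(1+u y)) du. -/
open MeasureTheory Real

/-- Bessel function of the first kind, via its power series. -/
noncomputable def besselJ (ν x : ℝ) : ℝ :=
  ∑' m : ℕ, (-1 : ℝ) ^ m * (x / 2) ^ (ν + 2 * m) / (m.factorial * Real.Gamma (ν + m + 1))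

/-!
Integrating the cosine series term by term against the weight `(1 - t²)^(ν - 1/2)` on `[-1, 1]`
turns the even moments into Beta integrals `B(m + 1/2, ν + 1/2)`; with
`Γ(m + 1/2) = √π (2m)! / (4^m m!)` this gives Poisson's integral
`J_ν(x) = (x/2)^ν / (√π Γ(ν + 1/2)) ∫_{-1}^{1} (1 - t²)^(ν - 1/2) cos (x t) dt`.
The involution `t = -(u + y)/(1 + u y)` of `[-1, 1]` has Jacobian `(1 - y²)/(1 + u y)²` and
satisfies `1 - t² = (1 - u²)(1 - y²)/(1 + u y)²`, so it preserves the form of the weight up to the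
factor `(1 - y²)^(ν + 1/2) / (1 + u y)^(2ν + 1)`. For `x = π y / 2` it moreover sends
`cos (x t)` to `sin (π (1 - y²) / (2 (1 + u y)))`.
-/

open Set intervalIntegral
open scoped Interval

lemma rpow_add_two_mul_natCast (x ν : ℝ) {m : ℕ} (h : ν + 2 * m ≠ 0 ∨ m = 0) :
    x ^ (ν + 2 * m) = x ^ ν * (x ^ 2) ^ m := by
  have hcast : ν + 2 * (m : ℝ) = ν + ((2 * m : ℕ) : ℝ) := by push_cast; ring
  rw [← pow_mul, hcast]
  rcases eq_or_ne x 0 with rfl | hx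
  · rcases h with h | rfl
    · exact rpow_add_natCast' le_rfl (by push_cast; exact h)
    · simp
  · exact rpow_add_natCast hx ν _

lemma Gamma_natCast_add_half (m : ℕ) :
    Gamma (m + 1 / 2) = √π * (2 * m).factorial / (4 ^ m * m.factorial) := by
  induction m with
  | zero => simpa using Gamma_one_half_eq
  | succ n ih =>
    rw [show ((n + 1 : ℕ) : ℝ) + 1 / 2 = (n + 1 / 2) + 1 by push_cast; ring,
      Gamma_add_one (by positivity), ih, Nat.mul_succ, Nat.factorial_succ, Nat.factorial_succ,
      Nat.factorial_succ]
    push_cast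
    field_simp
    ring

lemma integral_rpow_mul_one_sub_rpow {a b : ℝ} (ha : 0 < a) (hb : 0 < b) :
    ∫ x in (0 : ℝ)..1, x ^ (a - 1) * (1 - x) ^ (b - 1) = Gamma a * Gamma b / Gamma (a + b) := by
  have h := Complex.betaIntegral_eq_Gamma_mul_div a b (by simpa) (by simpa)
  rw [← Complex.ofReal_add, Complex.Gamma_ofReal, Complex.Gamma_ofReal, Complex.Gamma_ofReal,
    Complex.betaIntegral] at h
  apply Complex.ofReal_injective
  push_cast
  rw [← h, ← intervalIntegral.integral_ofReal]
  refine integral_congr fun x hx => ?_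
  rw [uIcc_of_le zero_le_one] at hx
  push_cast
  rw [Complex.ofReal_cpow hx.1, Complex.ofReal_cpow (by linarith [hx.2] : (0 : ℝ) ≤ 1 - x)]
  push_cast
  rfl

lemma integral_two_mul_mul_comp_sq (g : ℝ → ℝ) :
    ∫ t in (0 : ℝ)..1, 2 * t * g (t ^ 2) = ∫ x in (0 : ℝ)..1, g x := by
  have h := integral_Icc_deriv_smul_of_deriv_nonneg (f := fun t : ℝ => t ^ 2)
    (f' := fun t => 2 * t) (g := g) (a := 0) (b := 1) (continuous_pow 2).continuousOn
    (fun t _ => by simpa using hasDerivAt_pow 2 t) (fun t ht => by linarith [ht.1]) zero_le_one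
  simp only [smul_eq_mul, one_pow, ne_eq, OfNat.ofNat_ne_zero, not_false_eq_true, zero_pow] at h
  rwa [integral_of_le zero_le_one, integral_of_le zero_le_one, ← integral_Icc_eq_integral_Ioc,
    ← integral_Icc_eq_integral_Ioc]

lemma intervalIntegrable_neg_to_zero_of_even {f : ℝ → ℝ} {a : ℝ} (heven : ∀ x, f (-x) = f x)
    (hf : IntervalIntegrable f volume 0 a) : IntervalIntegrable f volume (-a) 0 := by
  simpa [heven] using ((IntervalIntegrable.iff_comp_neg).mp hf).symm

lemma integral_neg_to_self_of_even {f : ℝ → ℝ} {a : ℝ} (heven : ∀ x, f (-x) = f x)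
    (hf : IntervalIntegrable f volume 0 a) :
    ∫ x in -a..a, f x = 2 * ∫ x in (0 : ℝ)..a, f x := by
  have hneg : ∫ x in -a..0, f x = ∫ x in (0 : ℝ)..a, f x := by
    simpa [heven] using (integral_comp_neg (a := 0) (b := a) f).symm
  rw [← integral_add_adjacent_intervals (intervalIntegrable_neg_to_zero_of_even heven hf) hf, hneg,
    two_mul]

lemma intervalIntegrable_one_sub_sq_rpow {r : ℝ} (hr : -1 < r) :
    IntervalIntegrable (fun t : ℝ => (1 - t ^ 2) ^ r) volume (-1) 1 := by
  have hfactor : IntervalIntegrable (fun t : ℝ => (1 - t) ^ r * (1 + t) ^ r) volume 0 1 := by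
    refine IntervalIntegrable.mul_continuousOn ?_ ?_
    · simpa using (intervalIntegral.intervalIntegrable_rpow' hr (a := 1) (b := 0)).comp_sub_left 1
    · refine ContinuousOn.rpow_const (by fun_prop) fun t ht => Or.inl ?_
      rw [uIcc_of_le zero_le_one] at ht
      linarith [ht.1]
  have h01 : IntervalIntegrable (fun t : ℝ => (1 - t ^ 2) ^ r) volume 0 1 := by
    refine hfactor.congr fun t ht => ?_
    rw [uIoc_of_le zero_le_one] at ht
    rw [← mul_rpow (by linarith [ht.2]) (by linarith [ht.1])]
    ring_nf
  exact (intervalIntegrable_neg_to_zero_of_even (by simp) h01).trans h01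

lemma integral_pow_mul_one_sub_sq_rpow (m : ℕ) {b : ℝ} (hb : 0 < b) :
    ∫ t in (-1 : ℝ)..1, t ^ (2 * m) * (1 - t ^ 2) ^ (b - 1) =
      Gamma (m + 1 / 2) * Gamma b / Gamma (m + 1 / 2 + b) := by
  have hint : IntervalIntegrable (fun t : ℝ => t ^ (2 * m) * (1 - t ^ 2) ^ (b - 1)) volume 0 1 :=
    ((intervalIntegrable_one_sub_sq_rpow (by linarith)).mono_set
      (uIcc_subset_uIcc (by simp) (by simp))).continuousOn_mul (by fun_prop)
  rw [← integral_rpow_mul_one_sub_rpow (by positivity) hb, ← integral_two_mul_mul_comp_sq,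
    integral_neg_to_self_of_even (by simp [pow_mul]) hint, ← intervalIntegral.integral_const_mul]
  refine integral_congr_ae (ae_of_all _ fun t ht => ?_)
  rw [uIoc_of_le zero_le_one] at ht
  have ht0 : 0 < t := ht.1
  have hsq : (t ^ 2) ^ ((m : ℝ) + 1 / 2 - 1) = t ^ (2 * m) / t := by
    rw [← rpow_natCast t 2, ← rpow_mul ht0.le,
      show ((2 : ℕ) : ℝ) * (m + 1 / 2 - 1) = ((2 * m : ℕ) : ℝ) - 1 by push_cast; ring,
      rpow_sub_one ht0.ne', rpow_natCast]
  rw [hsq]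
  field_simp

lemma hasSum_integral_mul_cos {w : ℝ → ℝ} {a b : ℝ} (hw : IntervalIntegrable w volume a b)
    (x : ℝ) :
    HasSum
      (fun n : ℕ => (-1) ^ n * x ^ (2 * n) / (2 * n).factorial * ∫ t in a..b, t ^ (2 * n) * w t)
      (∫ t in a..b, w t * cos (x * t)) := by
  set F : ℕ → ℝ → ℝ := fun n t => (-1) ^ n * (x * t) ^ (2 * n) / (2 * n).factorial * w t
  set bound : ℕ → ℝ → ℝ := fun n t => (x * t) ^ (2 * n) / (2 * n).factorial * ‖w t‖
  have hmeas : ∀ n, AEStronglyMeasurable (F n) (volume.restrict (Ι a b)) := fun n =>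
    (Continuous.aestronglyMeasurable (by fun_prop)).mul
      (intervalIntegrable_iff.mp hw).aestronglyMeasurable
  have hbound : ∀ n t, ‖F n t‖ = bound n t := fun n t => by
    simp only [F, bound, norm_mul, norm_div, norm_pow, norm_neg, norm_one, one_pow, one_mul,
      Real.norm_of_nonneg (Even.pow_nonneg (even_two_mul n) (x * t)), Real.norm_natCast]
  have hbound_sum : ∀ t, HasSum (fun n => bound n t) (cosh (x * t) * ‖w t‖) := fun t =>
    (hasSum_cosh (x * t)).mul_right _
  have hbound_int : IntervalIntegrable (fun t => ∑' n, bound n t) volume a b := by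
    simp_rw [fun t => (hbound_sum t).tsum_eq]
    exact hw.norm.continuousOn_mul (by fun_prop)
  have hlim : ∀ t, HasSum (fun n => F n t) (w t * cos (x * t)) := fun t => by
    simpa only [F, mul_comm (w t)] using (hasSum_cos (x * t)).mul_right (w t)
  have hsum := intervalIntegral.hasSum_integral_of_dominated_convergence bound hmeas
    (fun n => ae_of_all _ fun t _ => (hbound n t).le)
    (ae_of_all _ fun t _ => (hbound_sum t).summable) hbound_int (ae_of_all _ fun t _ => hlim t)
  have hF : ∀ n, ∫ t in a..b, F n t =
      (-1) ^ n * x ^ (2 * n) / (2 * n).factorial * ∫ t in a..b, t ^ (2 * n) * w t := fun n => by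
    rw [← intervalIntegral.integral_const_mul]
    exact integral_congr fun t _ => by simp only [F]; ring
  simpa only [hF] using hsum

lemma besselJ_eq_integral_cos {ν : ℝ} (hν : -1 / 2 < ν) (x : ℝ) :
    besselJ ν x = (x / 2) ^ ν / (√π * Gamma (ν + 1 / 2)) *
      ∫ t in (-1 : ℝ)..1, (1 - t ^ 2) ^ (ν - 1 / 2) * cos (x * t) := by
  have hs := (hasSum_integral_mul_cos
    (intervalIntegrable_one_sub_sq_rpow (r := ν - 1 / 2) (by linarith)) x).mul_left
      ((x / 2) ^ ν / (√π * Gamma (ν + 1 / 2)))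
  rw [besselJ, ← hs.tsum_eq]
  refine tsum_congr fun n => ?_
  have hsplit : (x / 2) ^ (ν + 2 * n) = (x / 2) ^ ν * ((x / 2) ^ 2) ^ n := by
    refine rpow_add_two_mul_natCast _ _ ?_
    rcases n.eq_zero_or_pos with rfl | hn
    · exact Or.inr rfl
    · have : (1 : ℝ) ≤ n := by exact_mod_cast hn
      exact Or.inl (by linarith)
  have hΓ : Gamma (ν + n + 1) ≠ 0 := (Gamma_pos_of_pos (by linarith [n.cast_nonneg (α := ℝ)])).ne'
  have hΓ' : Gamma (ν + 1 / 2) ≠ 0 := (Gamma_pos_of_pos (by linarith)).ne'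
  have hpow : ((x / 2) ^ 2) ^ n = x ^ (2 * n) / 4 ^ n := by
    rw [pow_mul, ← div_pow, div_pow]
    norm_num
  rw [hsplit, hpow, show ν - 1 / 2 = ν + 1 / 2 - 1 by ring,
    integral_pow_mul_one_sub_sq_rpow n (by linarith), Gamma_natCast_add_half,
    show (n : ℝ) + 1 / 2 + (ν + 1 / 2) = ν + n + 1 by ring]
  -- otherwise `field_simp` rewrites the argument `ν + 1 / 2` in only some occurrences
  generalize Gamma (ν + 1 / 2) = G at hΓ' ⊢
  field_simp

section Mobius

variable {y : ℝ}

lemma one_add_mul_pos_of_abs_lt_one {u : ℝ} (hu : u ∈ Icc (-1 : ℝ) 1) (hy : |y| < 1) :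
    0 < 1 + u * y := by
  have h : |u * y| < 1 := by
    rw [abs_mul]
    exact (mul_le_of_le_one_left (abs_nonneg y) (abs_le.mpr hu)).trans_lt hy
  linarith [(abs_lt.mp h).1]

lemma one_sub_mobius_sq {u : ℝ} (hu : 1 + u * y ≠ 0) :
    1 - (-(u + y) / (1 + u * y)) ^ 2 = (1 - u ^ 2) * (1 - y ^ 2) / (1 + u * y) ^ 2 := by
  field_simp
  ring

lemma integral_comp_mobius (hy : |y| < 1) (g : ℝ → ℝ) :
    ∫ u in (-1 : ℝ)..1, (1 - y ^ 2) / (1 + u * y) ^ 2 * g (-(u + y) / (1 + u * y)) =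
      ∫ t in (-1 : ℝ)..1, g t := by
  have hy2 : 0 < 1 - y ^ 2 := by linarith [(sq_lt_one_iff_abs_lt_one y).mpr hy]
  have hpos : ∀ u ∈ Icc (-1 : ℝ) 1, 0 < 1 + u * y := fun u hu =>
    one_add_mul_pos_of_abs_lt_one hu hy
  have hderiv : ∀ u ∈ Ioo (-1 : ℝ) 1, HasDerivAt (fun u => -(u + y) / (1 + u * y))
      (-((1 - y ^ 2) / (1 + u * y) ^ 2)) u := fun u hu => by
    have hne := (hpos u (Ioo_subset_Icc_self hu)).ne'
    exact (((hasDerivAt_id' u).add_const y).fun_neg.fun_div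
      (((hasDerivAt_id' u).mul_const y).const_add 1) hne).congr_deriv (by ring)
  have h := integral_Icc_deriv_smul_of_deriv_nonpos (g := g)
    (ContinuousOn.div (by fun_prop) (by fun_prop) fun u hu => (hpos u hu).ne') hderiv
    (fun u hu => neg_nonpos.mpr (div_nonneg hy2.le (sq_nonneg _))) (by norm_num : (-1 : ℝ) ≤ 1)
  have h1 : -(1 + y) / (1 + 1 * y) = -1 := by
    rw [div_eq_iff (hpos 1 (by norm_num)).ne']
    ring
  have h2 : -(-1 + y) / (1 + -1 * y) = 1 := by
    rw [div_eq_iff (hpos (-1) (by norm_num)).ne']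
    ring
  simp only [Pi.div_apply] at h
  rw [h1, h2] at h
  simp only [smul_eq_mul, neg_mul, MeasureTheory.integral_neg, neg_inj] at h
  rwa [integral_of_le (by norm_num), integral_of_le (by norm_num), ← integral_Icc_eq_integral_Ioc,
    ← integral_Icc_eq_integral_Ioc]

lemma integral_one_sub_sq_rpow_mul_eq_integral_comp_mobius (hy : |y| < 1) (ν : ℝ) (g : ℝ → ℝ) :
    ∫ t in (-1 : ℝ)..1, (1 - t ^ 2) ^ (ν - 1 / 2) * g t =
      (1 - y ^ 2) ^ (ν + 1 / 2) * ∫ u in (-1 : ℝ)..1,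
        (1 - u ^ 2) ^ (ν - 1 / 2) / (1 + u * y) ^ (2 * ν + 1) * g (-(u + y) / (1 + u * y)) := by
  have hy2 : 0 < 1 - y ^ 2 := by linarith [(sq_lt_one_iff_abs_lt_one y).mpr hy]
  rw [← integral_comp_mobius hy, ← intervalIntegral.integral_const_mul]
  refine integral_congr fun u hu => ?_
  rw [uIcc_of_le (by norm_num)] at hu
  have hd := one_add_mul_pos_of_abs_lt_one hu hy
  have hu2 : 0 ≤ 1 - u ^ 2 := by nlinarith [hu.1, hu.2]
  have hden : ((1 + u * y) ^ 2) ^ (ν - 1 / 2) * (1 + u * y) ^ 2 = (1 + u * y) ^ (2 * ν + 1) := by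
    rw [← rpow_natCast _ 2, ← rpow_mul hd.le, ← rpow_add hd]
    norm_num
    ring_nf
  have hnum : (1 - y ^ 2) ^ (ν - 1 / 2) * (1 - y ^ 2) = (1 - y ^ 2) ^ (ν + 1 / 2) := by
    rw [← rpow_add_one hy2.ne']
    ring_nf
  rw [one_sub_mobius_sq hd.ne', div_rpow (by positivity) (by positivity), mul_rpow hu2 hy2.le,
    ← hden, ← hnum]
  field_simp

lemma cos_mul_mobius {u : ℝ} (hu : 1 + u * y ≠ 0) :
    cos (π * y / 2 * (-(u + y) / (1 + u * y))) = sin (π / 2 * (1 - y ^ 2) / (1 + u * y)) := by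
  have h : π / 2 * (1 - y ^ 2) / (1 + u * y) - π / 2 = π * y / 2 * (-(u + y) / (1 + u * y)) := by
    rw [div_sub' hu]
    ring
  rw [← cos_sub_pi_div_two, h]

end Mobius

theorem besselJ_int_rep (ν y : ℝ) (hν : ν > -1/2) (hy : |y| < 1) :
    besselJ ν (π * y / 2) =
      (1 / (Real.sqrt π * Real.Gamma (ν + 1/2))) * (π * y / 4) ^ ν *
        (1 - y ^ 2) ^ (ν + 1/2) *
        ∫ u in (-1 : ℝ)..1,
          (1 - u ^ 2) ^ (ν - 1/2) / (1 + u * y) ^ (2 * ν + 1) *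
            Real.sin ((π / 2) * (1 - y ^ 2) / (1 + u * y)) := by
  rw [besselJ_eq_integral_cos hν, integral_one_sub_sq_rpow_mul_eq_integral_comp_mobius hy]
  have hsin : ∫ u in (-1 : ℝ)..1, (1 - u ^ 2) ^ (ν - 1 / 2) / (1 + u * y) ^ (2 * ν + 1) *
      cos (π * y / 2 * (-(u + y) / (1 + u * y))) =
      ∫ u in (-1 : ℝ)..1, (1 - u ^ 2) ^ (ν - 1 / 2) / (1 + u * y) ^ (2 * ν + 1) *
        sin (π / 2 * (1 - y ^ 2) / (1 + u * y)) := by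
    refine integral_congr fun u hu => ?_
    rw [uIcc_of_le (by norm_num)] at hu
    simp only [cos_mul_mobius (one_add_mul_pos_of_abs_lt_one hu hy).ne']
  rw [hsin, show π * y / 2 / 2 = π * y / 4 by ring]
  ring
end

section
/- The confluent hypergeometric series ₀F₁ satisfies the product formula ₀F₁(c; x) · ₀F₁(c; y) = Σ_{r=0}^∞ (x y)^r / (r! (c)_r (c)_{2r}) · ₀F₁(c+2r; x+y), for all complex x, y and c not a nonpositive integer. -/
open scoped ComplexConjugate

/-- Pochhammer symbol for complex arguments. -/
noncomputable def pochC (c : ℂ) (k : ℕ) : ℂ := ∏ i ∈ Finset.range k, (c + i)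

/-- The confluent hypergeometric series `₀F₁`. -/
noncomputable def hyp0F1 (c x : ℂ) : ℂ := ∑' k : ℕ, x ^ k / (pochC c k * k.factorial)

/-!
Expanding `₀F₁(c + 2r; x + y)` by the binomial theorem turns the right-hand side into the
absolutely convergent triple series `∑_{r,i,j} x^(r+i) y^(r+j) / (r! i! j! (c)_r (c)_(2r+i+j))`.
Collecting the terms with `r + i = m`, `r + j = n` and clearing factorials, the coefficient of
`x^m y^n` matches that of the left-hand side by the identity
`(c + n)_m = ∑_r C(m, r) n(n-1)⋯(n-r+1) (c + r)_(m-r)`, which is Vandermonde's identity for falling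
factorials once `(a)_k` is read as the falling factorial of `a + k - 1`. The rearrangements are
justified because `1 / (c)_k` is bounded in `k`.
-/

open Finset Polynomial
open scoped Nat

lemma pochC_succ (c : ℂ) (k : ℕ) : pochC c (k + 1) = pochC c k * (c + k) :=
  prod_range_succ _ _

lemma pochC_add (c : ℂ) (m n : ℕ) : pochC c (m + n) = pochC c m * pochC (c + m) n := by
  simp only [pochC, prod_range_add, Nat.cast_add, add_assoc]

lemma pochC_ne_zero {c : ℂ} (hc : ∀ n : ℕ, c ≠ -(n : ℂ)) (k : ℕ) : pochC c k ≠ 0 :=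
  prod_ne_zero_iff.mpr fun i _ h => hc i (eq_neg_of_add_eq_zero_left h)

lemma pochC_eq_ascPochhammer_eval (c : ℂ) (k : ℕ) : pochC c k = (ascPochhammer ℂ k).eval c := by
  induction k with
  | zero => simp [pochC]
  | succ k ih => rw [pochC_succ, ih, ascPochhammer_succ_eval]

lemma pochC_eq_descPochhammer_smeval (c : ℂ) (k : ℕ) :
    pochC c k = (descPochhammer ℤ k).smeval (c + k - 1) := by
  rw [descPochhammer_smeval_eq_ascPochhammer, ascPochhammer_smeval_eq_eval,
    pochC_eq_ascPochhammer_eval]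
  ring_nf

lemma pochC_add_natCast (c : ℂ) (m n : ℕ) :
    pochC (c + n) m =
      ∑ ij ∈ antidiagonal m,
        (m.choose ij.1 * n.descFactorial ij.1 : ℂ) * pochC (c + ij.1) ij.2 := by
  rw [pochC_eq_descPochhammer_smeval, show c + n + m - 1 = (n : ℂ) + (c + m - 1) by ring,
    Ring.descPochhammer_smeval_add _ (Commute.all _ _)]
  refine sum_congr rfl fun ij hij => ?_
  rw [HasAntidiagonal.mem_antidiagonal] at hij
  rw [descPochhammer_smeval_eq_descFactorial, pochC_eq_descPochhammer_smeval, ← hij]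
  push_cast
  ring_nf

lemma exists_norm_inv_pochC_le (c : ℂ) : ∃ C, ∀ k, ‖(pochC c k)⁻¹‖ ≤ C := by
  obtain ⟨N, hN⟩ := exists_nat_ge (‖c‖ + 1)
  refine ⟨∑ j ∈ range (N + 1), ‖(pochC c j)⁻¹‖, fun k => ?_⟩
  set j := min k N with hj
  have tail : 1 ≤ ‖pochC (c + j) (k - j)‖ := by
    rw [pochC, norm_prod]
    refine one_le_prod fun i hi => ?_
    rw [mem_range] at hi
    have hjN : j = N := by omega
    have h := norm_sub_le (c + j + i) c
    rw [show c + j + i - c = ((N + i : ℕ) : ℂ) by rw [hjN]; push_cast; ring,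
      Complex.norm_natCast] at h
    push_cast at h
    linarith [(i.cast_nonneg : (0 : ℝ) ≤ i)]
  have split : pochC c k = pochC c j * pochC (c + j) (k - j) := by
    rw [← pochC_add, Nat.add_sub_cancel' (min_le_left _ _)]
  calc ‖(pochC c k)⁻¹‖ = ‖(pochC c j)⁻¹‖ / ‖pochC (c + j) (k - j)‖ := by
        rw [split, mul_inv, norm_mul, norm_inv, norm_inv, div_eq_mul_inv]
    _ ≤ ‖(pochC c j)⁻¹‖ := div_le_self (norm_nonneg _) tail
    _ ≤ _ := single_le_sum (f := fun j => ‖(pochC c j)⁻¹‖) (fun _ _ => norm_nonneg _)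
        (mem_range.mpr (Nat.lt_succ_of_le (min_le_right k N)))

lemma summable_pow_div_factorial_mul (a b : ℝ) :
    Summable fun p : ℕ × ℕ => a ^ p.1 / p.1 ! * (b ^ p.2 / p.2 !) := by
  have h (t : ℝ) : Summable fun k : ℕ => ‖t ^ k / (k ! : ℝ)‖ := by
    simpa only [norm_div, norm_pow, RCLike.norm_natCast] using Real.summable_pow_div_factorial ‖t‖
  exact summable_mul_of_summable_norm (f := fun k : ℕ => a ^ k / k !)
    (g := fun k : ℕ => b ^ k / k !) (h a) (h b)

lemma summable_norm_hyp0F1_term (c x : ℂ) :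
    Summable fun k : ℕ => ‖x ^ k / (pochC c k * k !)‖ := by
  obtain ⟨C, hC⟩ := exists_norm_inv_pochC_le c
  refine .of_nonneg_of_le (fun _ => norm_nonneg _) (fun k => ?_)
    ((Real.summable_pow_div_factorial ‖x‖).mul_left C)
  calc ‖x ^ k / (pochC c k * k !)‖ = ‖(pochC c k)⁻¹‖ * (‖x‖ ^ k / k !) := by
        simp only [norm_div, norm_mul, norm_inv, norm_pow, Complex.norm_natCast]; ring
    _ ≤ C * (‖x‖ ^ k / k !) := by gcongr; exact hC k

lemma summable_hyp0F1_add_term (c x y : ℂ) :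
    Summable fun p : ℕ × ℕ => x ^ p.1 * y ^ p.2 / (p.1 ! * p.2 ! * pochC c (p.1 + p.2)) := by
  obtain ⟨C, hC⟩ := exists_norm_inv_pochC_le c
  refine Summable.of_norm <| .of_nonneg_of_le (fun _ => norm_nonneg _) (fun p => ?_)
    ((summable_pow_div_factorial_mul ‖x‖ ‖y‖).mul_left C)
  calc _ = ‖(pochC c (p.1 + p.2))⁻¹‖ * (‖x‖ ^ p.1 / p.1 ! * (‖y‖ ^ p.2 / p.2 !)) := by
        simp only [norm_div, norm_mul, norm_inv, norm_pow, Complex.norm_natCast]; ring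
    _ ≤ C * (‖x‖ ^ p.1 / p.1 ! * (‖y‖ ^ p.2 / p.2 !)) := by gcongr; exact hC _

noncomputable def hyp0F1ProductTerm (c x y : ℂ) (t : ℕ × ℕ × ℕ) : ℂ :=
  x ^ (t.1 + t.2.1) * y ^ (t.1 + t.2.2) /
    (t.1 ! * t.2.1 ! * t.2.2 ! * pochC c t.1 * pochC c (2 * t.1 + t.2.1 + t.2.2))

lemma summable_hyp0F1ProductTerm (c x y : ℂ) : Summable (hyp0F1ProductTerm c x y) := by
  obtain ⟨C, hC⟩ := exists_norm_inv_pochC_le c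
  have hbound : Summable fun t : ℕ × ℕ × ℕ => (‖x‖ * ‖y‖) ^ t.1 / t.1 ! *
      (‖x‖ ^ t.2.1 / t.2.1 ! * (‖y‖ ^ t.2.2 / t.2.2 !)) :=
    (Real.summable_pow_div_factorial _).mul_of_nonneg (summable_pow_div_factorial_mul _ _)
      (fun _ => by positivity) (fun _ => by positivity)
  refine Summable.of_norm <| .of_nonneg_of_le (fun _ => norm_nonneg _) (fun t => ?_)
    (hbound.mul_left (C * C))
  obtain ⟨r, i, j⟩ := t
  calc _ = ‖(pochC c r)⁻¹‖ * ‖(pochC c (2 * r + i + j))⁻¹‖ *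
        ((‖x‖ * ‖y‖) ^ r / r ! * (‖x‖ ^ i / i ! * (‖y‖ ^ j / j !))) := by
        simp only [hyp0F1ProductTerm, norm_div, norm_mul, norm_inv, norm_pow,
          Complex.norm_natCast, pow_add, mul_pow]
        ring
    _ ≤ C * C * ((‖x‖ * ‖y‖) ^ r / r ! * (‖x‖ ^ i / i ! * (‖y‖ ^ j / j !))) := by
        have hC0 : 0 ≤ C := (norm_nonneg _).trans (hC 0)
        gcongr
        exacts [hC _, hC _]

lemma Summable.tsum_eq_tsum_sum_antidiagonal {A α : Type*} [AddCommMonoid A] [HasAntidiagonal A]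
    [AddCommMonoid α] [TopologicalSpace α] [ContinuousAdd α] [T3Space α] {f : A × A → α}
    (hf : Summable f) : ∑' p, f p = ∑' n, ∑ p ∈ antidiagonal n, f p := by
  have hs : Summable fun s => f (HasAntidiagonal.sigmaAntidiagonalEquivProd s) :=
    HasAntidiagonal.sigmaAntidiagonalEquivProd.summable_iff.mpr hf
  rw [← HasAntidiagonal.sigmaAntidiagonalEquivProd.tsum_eq f,
    Summable.tsum_sigma' (fun _ => (hasSum_fintype _).summable) hs]
  exact tsum_congr fun n => Finset.tsum_subtype _ _

def addDiagonalEquiv : ℕ × ℕ × ℕ ≃ Σ p : ℕ × ℕ, range (min p.1 p.2 + 1) where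
  toFun t := ⟨(t.1 + t.2.1, t.1 + t.2.2), t.1, mem_range.mpr (by omega)⟩
  invFun s := (s.2, s.1.1 - s.2, s.1.2 - s.2)
  left_inv := by rintro ⟨r, i, j⟩; simp
  right_inv := by
    rintro ⟨⟨m, n⟩, r, hr⟩
    rw [mem_range] at hr
    exact Sigma.subtype_ext (Prod.ext (by simp; omega) (by simp; omega)) rfl

lemma Summable.tsum_eq_tsum_sum_range_min {α : Type*} [AddCommMonoid α] [TopologicalSpace α]
    [ContinuousAdd α] [T3Space α] {f : ℕ × ℕ × ℕ → α} (hf : Summable f) :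
    ∑' t, f t = ∑' p : ℕ × ℕ, ∑ r ∈ range (min p.1 p.2 + 1), f (r, p.1 - r, p.2 - r) := by
  have hs : Summable fun s => f (addDiagonalEquiv.symm s) :=
    addDiagonalEquiv.symm.summable_iff.mpr hf
  rw [← addDiagonalEquiv.symm.tsum_eq f,
    Summable.tsum_sigma' (fun _ => (hasSum_fintype _).summable) hs]
  exact tsum_congr fun p => Finset.tsum_subtype _ (fun r => f (r, p.1 - r, p.2 - r))

lemma hyp0F1_add (c x y : ℂ) :
    hyp0F1 c (x + y) =
      ∑' p : ℕ × ℕ, x ^ p.1 * y ^ p.2 / (p.1 ! * p.2 ! * pochC c (p.1 + p.2)) := by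
  rw [(summable_hyp0F1_add_term c x y).tsum_eq_tsum_sum_antidiagonal, hyp0F1]
  refine tsum_congr fun n => ?_
  rw [(Commute.all x y).add_pow', sum_div]
  refine sum_congr rfl fun p hp => ?_
  rw [HasAntidiagonal.mem_antidiagonal] at hp
  subst hp
  have hchoose : ((p.1 + p.2).choose p.1 : ℂ) ≠ 0 := by
    exact_mod_cast (Nat.choose_pos (Nat.le_add_right _ _)).ne'
  rw [nsmul_eq_mul, ← Nat.add_choose_mul_factorial_mul_factorial, ← Nat.choose_symm_add]
  push_cast
  field_simp

lemma tsum_hyp0F1ProductTerm_of_fst (c x y : ℂ) (r : ℕ) :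
    ∑' q : ℕ × ℕ, hyp0F1ProductTerm c x y (r, q) =
      (x * y) ^ r / (r ! * pochC c r * pochC c (2 * r)) * hyp0F1 (c + 2 * r) (x + y) := by
  rw [hyp0F1_add, ← tsum_mul_left]
  refine tsum_congr fun q => ?_
  have hpoch : pochC c (2 * r + q.1 + q.2) = pochC c (2 * r) * pochC (c + 2 * r) (q.1 + q.2) := by
    rw [add_assoc, pochC_add]; push_cast; rfl
  rw [hyp0F1ProductTerm, hpoch]
  simp only [pow_add, mul_pow, div_eq_mul_inv, mul_inv]
  ring

lemma factorial_mul_factorial_mul_pochC_eq {c : ℂ} {m n r : ℕ} (hrm : r ≤ m) (hrn : r ≤ n) :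
    (m ! * n ! * pochC c m : ℂ) = r ! * (m - r) ! * (n - r) ! * pochC c r *
      (m.choose r * n.descFactorial r * pochC (c + r) (m - r)) := by
  rw [← Nat.choose_mul_factorial_mul_factorial hrm, ← Nat.factorial_mul_descFactorial hrn,
    ← Nat.add_sub_cancel' hrm, pochC_add, Nat.add_sub_cancel_left]
  push_cast
  ring

lemma sum_range_min_hyp0F1ProductTerm {c : ℂ} (hc : ∀ n : ℕ, c ≠ -(n : ℂ)) (x y : ℂ) (m n : ℕ) :
    ∑ r ∈ range (min m n + 1), hyp0F1ProductTerm c x y (r, m - r, n - r) =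
      x ^ m / (pochC c m * m !) * (y ^ n / (pochC c n * n !)) := by
  set w : ℕ → ℂ := fun r => m.choose r * n.descFactorial r * pochC (c + r) (m - r)
  have hD : (m ! * n ! * pochC c m * pochC c (m + n) : ℂ) ≠ 0 := by
    simp [pochC_ne_zero hc, Nat.factorial_ne_zero]
  have hterm : ∀ r ∈ range (min m n + 1), hyp0F1ProductTerm c x y (r, m - r, n - r) =
      x ^ m * y ^ n / (m ! * n ! * pochC c m * pochC c (m + n)) * w r := by
    intro r hr
    have hrm : r ≤ m := by rw [mem_range] at hr; omega
    have hrn : r ≤ n := by rw [mem_range] at hr; omega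
    rw [factorial_mul_factorial_mul_pochC_eq hrm hrn] at hD
    have hw0 : w r ≠ 0 := right_ne_zero_of_mul (left_ne_zero_of_mul hD)
    simp only [hyp0F1ProductTerm, Nat.add_sub_cancel' hrm, Nat.add_sub_cancel' hrn,
      show 2 * r + (m - r) + (n - r) = m + n by omega]
    rw [factorial_mul_factorial_mul_pochC_eq hrm hrn, ← mul_div_mul_right (x ^ m * y ^ n) _ hw0]
    ring
  have hw : ∑ r ∈ range (min m n + 1), w r = pochC (c + n) m := by
    rw [pochC_add_natCast, Nat.sum_antidiagonal_eq_sum_range_succ_mk]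
    refine sum_subset (range_subset_range.mpr (by omega)) fun r hrm hr => ?_
    rw [mem_range] at hrm hr
    simp [w, Nat.descFactorial_eq_zero_iff_lt.mpr (show n < r by omega)]
  have hPn : pochC (c + n) m ≠ 0 := by
    have := pochC_ne_zero hc (n + m)
    rw [pochC_add] at this
    exact right_ne_zero_of_mul this
  rw [sum_congr rfl hterm, ← mul_sum, hw, add_comm m n, pochC_add]
  field_simp

theorem hyp0F1_product (c x y : ℂ) (hc : ∀ n : ℕ, c ≠ -(n : ℂ)) :
    hyp0F1 c x * hyp0F1 c y =
      ∑' r : ℕ, (x * y) ^ r / (r.factorial * pochC c r * pochC c (2 * r)) *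
        hyp0F1 (c + 2 * r) (x + y) := by
  have hH := summable_hyp0F1ProductTerm c x y
  calc hyp0F1 c x * hyp0F1 c y
      = ∑' p : ℕ × ℕ, x ^ p.1 / (pochC c p.1 * p.1 !) * (y ^ p.2 / (pochC c p.2 * p.2 !)) :=
        tsum_mul_tsum_of_summable_norm (summable_norm_hyp0F1_term c x)
          (summable_norm_hyp0F1_term c y)
    _ = ∑' p : ℕ × ℕ, ∑ r ∈ range (min p.1 p.2 + 1),
          hyp0F1ProductTerm c x y (r, p.1 - r, p.2 - r) :=
        tsum_congr fun p => (sum_range_min_hyp0F1ProductTerm hc x y p.1 p.2).symm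
    _ = ∑' r : ℕ, ∑' q : ℕ × ℕ, hyp0F1ProductTerm c x y (r, q) := by
        rw [← hH.tsum_eq_tsum_sum_range_min, hH.tsum_prod' hH.prod_factor]
    _ = _ := tsum_congr (tsum_hyp0F1ProductTerm_of_fst c x y)
end

section
/- For p > 0, a > 0 and Re ν > -1, ∫_0^∞ e^{-p x²} x^{ν+1} J_ν(a x) dx = a^ν / (2p)^{ν+1} · e^{-a²/(4p)}. -/
open MeasureTheory Real

/-!
Expand `J_ν(a x)` in its power series and integrate term by term. The `m`-th term is a Gaussian
moment, `∫₀^∞ x^(2ν+2m+1) e^(-p x²) dx = Γ(ν+m+1) / (2 p^(ν+m+1))`, whose Gamma factor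
cancels the one in the Bessel coefficient and leaves `a^ν / (2p)^(ν+1) · (-a²/(4p))^m / m!`;
these sum to the exponential. The interchange is legitimate because each term has constant sign on
`(0, ∞)`, so the series of absolute integrals is the exponential series at `a²/(4p)`.
-/

open Set Nat

theorem hasSum_integral_mul_of_nonneg {α : Type*} [MeasurableSpace α] {μ : Measure α}
    {c : ℕ → ℝ} {f : ℕ → α → ℝ} (hf_int : ∀ m, Integrable (f m) μ)
    (hf_nonneg : ∀ m, 0 ≤ᵐ[μ] f m) (hsum : Summable fun m => |c m| * ∫ x, f m x ∂μ) :
    HasSum (fun m => c m * ∫ x, f m x ∂μ) (∫ x, ∑' m, c m * f m x ∂μ) := by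
  have hnorm : ∀ m, ∫ x, ‖c m * f m x‖ ∂μ = |c m| * ∫ x, f m x ∂μ := fun m => by
    rw [← integral_const_mul]
    refine integral_congr_ae ?_
    filter_upwards [hf_nonneg m] with x hx
    rw [norm_mul, norm_eq_abs, norm_of_nonneg hx]
  simpa only [integral_const_mul] using
    hasSum_integral_of_summable_integral_norm (fun m => (hf_int m).const_mul (c m))
      (by simpa only [hnorm] using hsum)

theorem integral_rpow_mul_exp_neg_mul_sq {b s : ℝ} (hb : 0 < b) (hs : -1 < s) :
    ∫ x in Ioi (0 : ℝ), x ^ s * exp (-b * x ^ 2) =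
      b ^ (-(s + 1) / 2) * (1 / 2) * Gamma ((s + 1) / 2) := by
  simp_rw [← rpow_two]
  exact integral_rpow_mul_exp_neg_mul_rpow two_pos hs hb

theorem div_two_rpow_mul_rpow_neg_div_two_eq {ν a p : ℝ} (ha : 0 < a) (hp : 0 < p) (m : ℕ) :
    (a / 2) ^ (ν + 2 * m) * p ^ (-(ν + m + 1)) / 2 =
      a ^ ν / (2 * p) ^ (ν + 1) * (a ^ 2 / (4 * p)) ^ m := by
  have h2m : (a / 2) ^ (ν + 2 * m) = a ^ ν / 2 ^ ν * ((a / 2) ^ 2) ^ m := by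
    rw [rpow_add (by positivity), div_rpow ha.le zero_le_two, ← pow_mul, ← rpow_natCast]
    push_cast; rfl
  have hpm : p ^ (-(ν + m + 1)) = (p ^ ν * p ^ m * p)⁻¹ := by
    rw [rpow_neg hp.le, rpow_add hp, rpow_add hp, rpow_natCast, rpow_one]
  have h2p : (2 * p) ^ (ν + 1) = 2 ^ ν * p ^ ν * (2 * p) := by
    rw [rpow_add_one (by positivity), mul_rpow zero_le_two hp.le]
  have : 0 < (2 : ℝ) ^ ν := by positivity
  have : 0 < p ^ ν := by positivity
  rw [h2m, hpm, h2p]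
  simp only [div_pow, mul_pow]
  field_simp
  ring

section WeberTerm

variable {p t s a : ℝ}

theorem exp_mul_rpow_mul_rpow_eq (ha : 0 ≤ a) {x : ℝ} (hx : 0 < x) :
    exp (-p * x ^ 2) * x ^ t * (a * x / 2) ^ s =
      (a / 2) ^ s * (x ^ (t + s) * exp (-p * x ^ 2)) := by
  rw [mul_div_right_comm, mul_rpow (by positivity) hx.le, rpow_add hx]
  ring

theorem integrableOn_exp_mul_rpow_mul_rpow (hp : 0 < p) (ha : 0 ≤ a) (hts : -1 < t + s) :
    IntegrableOn (fun x => exp (-p * x ^ 2) * x ^ t * (a * x / 2) ^ s) (Ioi 0) :=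
  IntegrableOn.congr_fun (Integrable.const_mul (integrableOn_rpow_mul_exp_neg_mul_sq hp hts) _)
    (fun _ hx => (exp_mul_rpow_mul_rpow_eq ha hx).symm) measurableSet_Ioi

theorem integral_exp_mul_rpow_mul_rpow (hp : 0 < p) (ha : 0 ≤ a) (hts : -1 < t + s) :
    ∫ x in Ioi (0 : ℝ), exp (-p * x ^ 2) * x ^ t * (a * x / 2) ^ s =
      (a / 2) ^ s * (p ^ (-(t + s + 1) / 2) * (1 / 2) * Gamma ((t + s + 1) / 2)) := by
  rw [setIntegral_congr_fun measurableSet_Ioi fun _ hx => exp_mul_rpow_mul_rpow_eq ha hx,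
    integral_const_mul, integral_rpow_mul_exp_neg_mul_sq hp hts]

end WeberTerm

theorem integral_weber_term {ν a p : ℝ} (hp : 0 < p) (ha : 0 < a) (hν : -1 < ν) (m : ℕ) :
    ∫ x in Ioi (0 : ℝ), exp (-p * x ^ 2) * x ^ (ν + 1) * (a * x / 2) ^ (ν + 2 * m) =
      a ^ ν / (2 * p) ^ (ν + 1) * (a ^ 2 / (4 * p)) ^ m * Gamma (ν + m + 1) := by
  rw [integral_exp_mul_rpow_mul_rpow hp ha.le (by linarith [m.cast_nonneg (α := ℝ)]),
    ← div_two_rpow_mul_rpow_neg_div_two_eq ha hp m,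
    show (ν + 1 + (ν + 2 * m) + 1) / 2 = ν + m + 1 by ring, neg_div, mul_div_assoc]
  ring_nf

theorem pow_div_mul_integral_weber_term {ν a p : ℝ} (hp : 0 < p) (ha : 0 < a) (hν : -1 < ν)
    (ε : ℝ) (m : ℕ) :
    ε ^ m / (m ! * Gamma (ν + m + 1)) *
        ∫ x in Ioi (0 : ℝ), exp (-p * x ^ 2) * x ^ (ν + 1) * (a * x / 2) ^ (ν + 2 * m) =
      a ^ ν / (2 * p) ^ (ν + 1) * ((ε * (a ^ 2 / (4 * p))) ^ m / m !) := by
  have hΓ : 0 < Gamma (ν + m + 1) := Gamma_pos_of_pos (by linarith [m.cast_nonneg (α := ℝ)])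
  rw [integral_weber_term hp ha hν, mul_pow]
  field_simp

theorem weber_first_integral (ν a p : ℝ) (hp : 0 < p) (ha : 0 < a) (hν : ν > -1) :
    (∫ x in Set.Ioi (0 : ℝ), Real.exp (-p * x ^ 2) * x ^ (ν + 1) * besselJ ν (a * x)) =
      a ^ ν / (2 * p) ^ (ν + 1) * Real.exp (-a ^ 2 / (4 * p)) := by
  set c : ℕ → ℝ := fun m => (-1) ^ m / (m ! * Gamma (ν + m + 1))
  set f : ℕ → ℝ → ℝ := fun m x =>
    exp (-p * x ^ 2) * x ^ (ν + 1) * (a * x / 2) ^ (ν + 2 * m)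
  have habs (m : ℕ) : |c m| = 1 ^ m / (m ! * Gamma (ν + m + 1)) := by
    have := Gamma_pos_of_pos (by linarith [m.cast_nonneg (α := ℝ)] : 0 < ν + m + 1)
    rw [abs_div, abs_pow, abs_neg, abs_one, abs_of_pos (by positivity)]
  have hsum := hasSum_integral_mul_of_nonneg (μ := volume.restrict (Ioi 0)) (c := c) (f := f)
    (fun m => integrableOn_exp_mul_rpow_mul_rpow hp ha.le (by linarith [m.cast_nonneg (α := ℝ)]))
    (fun m => ae_restrict_of_forall_mem measurableSet_Ioi fun x (hx : 0 < x) => by positivity)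
    (by simpa only [habs, f, pow_div_mul_integral_weber_term hp ha hν, one_mul] using
      (summable_pow_div_factorial _).mul_left _)
  calc _ = ∫ x in Ioi 0, ∑' m, c m * f m x := by
        congr 1; funext x
        simp only [besselJ, c, f, ← tsum_mul_left]
        congr 1; funext m; ring
    _ = ∑' m : ℕ, a ^ ν / (2 * p) ^ (ν + 1) * ((-(a ^ 2 / (4 * p))) ^ m / m !) := by
      simp only [← hsum.tsum_eq, c, f, pow_div_mul_integral_weber_term hp ha hν, neg_one_mul]
    _ = a ^ ν / (2 * p) ^ (ν + 1) * exp (-a ^ 2 / (4 * p)) := by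
      rw [tsum_mul_left, neg_div, exp_eq_exp_ℝ, (NormedSpace.expSeries_div_hasSum_exp _).tsum_eq]
end

section
/- For any natural number n and reals β₂, β₃ > 0: β₃^{2n} · ₂F₁(-n, -n; 1; β₂²/β₃²) = (1/π) ∫_0^π (β₂² + β₃² - 2 β₂ β₃ cos θ)^n dθ. -/
/-!
With `z = e^{iθ}`, the integrand is `|β₂ z - β₃|^{2n}`, and by the binomial theorem
`(β₂ z - β₃)^n = Σ_j a_j z^j` with real `a_j = C(n,j) β₂^j (-β₃)^(n-j)`.
Then `|Σ_j a_j z^j|² = Σ_{j,k} a_j a_k cos((j-k)θ)`, and the cosines are orthogonal on `[0, π]`,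
so the average over `[0, π]` is `Σ_j a_j² = β₃^{2n} ₂F₁(-n,-n;1;β₂²/β₃²)`.
-/

open MeasureTheory Real

/-- Terminating hypergeometric `₂F₁(-n,-n;1;x) = Σ_{k=0}^n binom(n,k)² x^k`. -/
noncomputable def hyp2F1nn (n : ℕ) (x : ℝ) : ℝ :=
  ∑ k ∈ Finset.range (n + 1), ((n.choose k : ℝ)) ^ 2 * x ^ k

section

open Complex

theorem normSq_ofReal_mul_exp_sub_ofReal (a b θ : ℝ) :
    normSq (a * exp (θ * I) - b) = a ^ 2 + b ^ 2 - 2 * a * b * Real.cos θ := by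
  rw [normSq_apply]
  simp only [sub_re, sub_im, re_ofReal_mul, im_ofReal_mul, exp_ofReal_mul_I_re,
    exp_ofReal_mul_I_im, ofReal_re, ofReal_im]
  linear_combination a ^ 2 * Real.sin_sq_add_cos_sq θ

theorem ofReal_mul_exp_sub_ofReal_pow (a b θ : ℝ) (n : ℕ) :
    ((a : ℂ) * exp (θ * I) - b) ^ n =
      ∑ j ∈ Finset.range (n + 1), ((n.choose j * a ^ j * (-b) ^ (n - j) : ℝ) : ℂ) *
        exp ((j * θ : ℝ) * I) := by
  rw [sub_eq_add_neg, add_pow]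
  refine Finset.sum_congr rfl fun j _ => ?_
  push_cast
  rw [mul_assoc (j : ℂ), Complex.exp_nat_mul, mul_pow]
  ring

theorem normSq_sum_mul_exp (s : Finset ℕ) (a : ℕ → ℝ) (θ : ℝ) :
    normSq (∑ j ∈ s, a j * exp ((j * θ : ℝ) * I)) =
      ∑ j ∈ s, ∑ k ∈ s, a j * a k * Real.cos (((j : ℝ) - k) * θ) := by
  simp only [normSq_apply, re_sum, im_sum, re_ofReal_mul, im_ofReal_mul, exp_ofReal_mul_I_re,
    exp_ofReal_mul_I_im, Finset.sum_mul_sum, ← Finset.sum_add_distrib, sub_mul, Real.cos_sub]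
  refine Finset.sum_congr rfl fun j _ => Finset.sum_congr rfl fun k _ => ?_
  ring

theorem integral_cos_natCast_sub_mul (j k : ℕ) :
    ∫ θ in (0 : ℝ)..π, Real.cos (((j : ℝ) - k) * θ) = if j = k then π else 0 := by
  split_ifs with h
  · simp [h]
  · have hjk : ((j : ℝ) - k) ≠ 0 := sub_ne_zero.mpr (by exact_mod_cast h)
    have hπ : ((j : ℝ) - k) * π = (((j : ℤ) - k : ℤ) : ℝ) * π := by push_cast; ring
    rw [intervalIntegral.integral_comp_mul_left Real.cos hjk, mul_zero, integral_cos, hπ,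
      Real.sin_int_mul_pi, Real.sin_zero, sub_zero, smul_zero]

theorem integral_normSq_sum_mul_exp (s : Finset ℕ) (a : ℕ → ℝ) :
    ∫ θ in (0 : ℝ)..π, normSq (∑ j ∈ s, a j * exp ((j * θ : ℝ) * I)) = π * ∑ j ∈ s, a j ^ 2 := by
  have hcont (j k : ℕ) : Continuous fun θ => a j * a k * Real.cos (((j : ℝ) - k) * θ) := by
    fun_prop
  simp_rw [normSq_sum_mul_exp]
  rw [intervalIntegral.integral_finsetSum fun j _ =>
    (continuous_finsetSum s fun k _ => hcont j k).intervalIntegrable 0 π, Finset.mul_sum]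
  refine Finset.sum_congr rfl fun j hj => ?_
  rw [intervalIntegral.integral_finsetSum fun k _ => (hcont j k).intervalIntegrable 0 π]
  simp_rw [intervalIntegral.integral_const_mul, integral_cos_natCast_sub_mul, mul_ite, mul_zero,
    Finset.sum_ite_eq, if_pos hj]
  ring

end

theorem pow_two_mul_mul_div_sq_pow {n j : ℕ} (hj : j ≤ n) (a : ℝ) {b : ℝ} (hb : b ≠ 0) :
    b ^ (2 * n) * (a ^ 2 / b ^ 2) ^ j = (a ^ j * (-b) ^ (n - j)) ^ 2 := by
  obtain ⟨m, rfl⟩ := Nat.exists_eq_add_of_le hj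
  rw [Nat.add_sub_cancel_left, mul_pow, pow_right_comm (-b), neg_sq, mul_add, pow_add, pow_mul,
    pow_mul, div_pow, pow_right_comm a]
  field_simp

open Complex in
theorem hyp2F1nn_integral_rep_general (n : ℕ) (β₂ β₃ : ℝ) (h₃ : 0 < β₃) :
    β₃ ^ (2 * n) * hyp2F1nn n (β₂ ^ 2 / β₃ ^ 2) =
      (1 / π) * ∫ θ in (0 : ℝ)..π,
        (β₂ ^ 2 + β₃ ^ 2 - 2 * β₂ * β₃ * Real.cos θ) ^ n := by
  have hexpand (θ : ℝ) : (β₂ ^ 2 + β₃ ^ 2 - 2 * β₂ * β₃ * Real.cos θ) ^ n =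
      normSq (∑ j ∈ Finset.range (n + 1), ((n.choose j * β₂ ^ j * (-β₃) ^ (n - j) : ℝ) : ℂ) *
        exp ((j * θ : ℝ) * I)) := by
    rw [← normSq_ofReal_mul_exp_sub_ofReal, ← map_pow, ofReal_mul_exp_sub_ofReal_pow]
  simp_rw [hexpand, integral_normSq_sum_mul_exp, one_div, inv_mul_cancel_left₀ pi_ne_zero,
    hyp2F1nn, Finset.mul_sum]
  refine Finset.sum_congr rfl fun j hj => ?_
  rw [mul_left_comm, pow_two_mul_mul_div_sq_pow (Finset.mem_range_succ_iff.mp hj) β₂ h₃.ne']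
  ring

theorem hyp2F1nn_integral_rep (n : ℕ) (β₂ β₃ : ℝ) (h₂ : 0 < β₂) (h₃ : 0 < β₃) :
    β₃ ^ (2 * n) * hyp2F1nn n (β₂ ^ 2 / β₃ ^ 2) =
      (1 / π) * ∫ θ in (0 : ℝ)..π,
        (β₂ ^ 2 + β₃ ^ 2 - 2 * β₂ * β₃ * Real.cos θ) ^ n :=
  hyp2F1nn_integral_rep_general n β₂ β₃ h₃
end
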